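/- arXiv:2004.07383 — 3 statements merged into one kernel-verified Lean document; each statement's English description precedes it below -/
import Mathlib

section
/- Let G = (V, E) be a connected simple graph on a finite set V, let T(G) be the terrain induced by G, and let P be a partition of V conforming to T(G) with at least 3 parts. Then there exists a partition P′ of V conforming to T(G) that is a coarsening of P; in particular, P is not maximally coarse. -/
/-
Since `G` is connected, some part `p` of `P` is joined by an edge to a different part `q`.
The union `p ∪ q` is then connected, and it is not all of `V` because a third part of `P`
is disjoint from it. Replacing `p` and `q` by `p ∪ q` gives a conforming partition with one
part fewer.
-/

/-- A set of vertices is connected in `G` if the induced subgraph is connected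
(this includes nonemptiness). -/
def ConnectedIn {V : Type*} (G : SimpleGraph V) (A : Set V) : Prop :=
  (G.induce A).Connected

/-- The terrain induced by `G`: all vertex sets that are connected in `G`
and are not the full vertex set. -/
def InducedTerrain {V : Type*} (G : SimpleGraph V) : Set (Set V) :=
  {A | ConnectedIn G A ∧ A ≠ Set.univ}

/-- A partition conforms to the terrain induced by `G` if all its parts lie in it. -/
def Conforms {V : Type*} (G : SimpleGraph V) (P : Set (Set V)) : Prop :=
  ∀ p ∈ P, p ∈ InducedTerrain G

/-- `P₁` is a coarsening of `P₂`: strictly fewer parts, and every part of `P₂`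
is contained in some part of `P₁`. -/
def Coarsening {V : Type*} (P₁ P₂ : Set (Set V)) : Prop :=
  P₁.ncard < P₂.ncard ∧ ∀ p ∈ P₂, ∃ q ∈ P₁, p ⊆ q

section MergeParts

variable {α : Type*} {P : Set (Set α)} {p q : Set α}

def mergeParts (P : Set (Set α)) (p q : Set α) : Set (Set α) :=
  insert (p ∪ q) (P \ {p, q})

theorem isPartition_mergeParts (hP : Setoid.IsPartition P) (hp : p ∈ P) (hq : q ∈ P) :
    Setoid.IsPartition (mergeParts P p q) := by
  have hdisj := hP.pairwiseDisjoint
  refine Set.PairwiseDisjoint.isPartition_of_exists_of_ne_empty ?_ ?_ ?_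
  · refine (hdisj.subset Set.sdiff_subset).insert fun r hr _ => ?_
    have hrp : p ≠ r := fun h => hr.2 (Or.inl h.symm)
    have hrq : q ≠ r := fun h => hr.2 (Or.inr h.symm)
    exact Disjoint.union_left (hdisj hp hr.1 hrp) (hdisj hq hr.1 hrq)
  · intro x
    obtain ⟨r, ⟨hr, hxr⟩, -⟩ := hP.2 x
    by_cases hr' : r = p ∨ r = q
    · refine ⟨p ∪ q, Set.mem_insert _ _, ?_⟩
      rcases hr' with rfl | rfl
      exacts [Or.inl hxr, Or.inr hxr]
    · exact ⟨r, Set.mem_insert_of_mem _ ⟨hr, hr'⟩, hxr⟩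
  · rintro (h | h)
    · exact ((Setoid.nonempty_of_mem_partition hP hp).mono Set.subset_union_left).ne_empty h.symm
    · exact hP.1 h.1

theorem ncard_mergeParts_lt (hfin : P.Finite) (hp : p ∈ P) (hq : q ∈ P) (hpq : p ≠ q) :
    (mergeParts P p q).ncard < P.ncard := by
  have hpair : ({p, q} : Set (Set α)) ⊆ P := Set.insert_subset hp (Set.singleton_subset_iff.mpr hq)
  have hdiff : (P \ {p, q}).ncard = P.ncard - 2 := by
    rw [Set.ncard_sdiff hpair (Set.toFinite _), Set.ncard_pair hpq]
  have htwo : 2 ≤ P.ncard := Set.ncard_pair hpq ▸ Set.ncard_le_ncard hpair hfin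
  calc (mergeParts P p q).ncard ≤ (P \ {p, q}).ncard + 1 := Set.ncard_insert_le _ _
    _ < P.ncard := by omega

theorem coarsening_mergeParts (hfin : P.Finite) (hp : p ∈ P) (hq : q ∈ P) (hpq : p ≠ q) :
    Coarsening (mergeParts P p q) P := by
  refine ⟨ncard_mergeParts_lt hfin hp hq hpq, fun r hr => ?_⟩
  by_cases hr' : r = p ∨ r = q
  · refine ⟨p ∪ q, Set.mem_insert _ _, ?_⟩
    rcases hr' with rfl | rfl
    exacts [Set.subset_union_left, Set.subset_union_right]
  · exact ⟨r, Set.mem_insert_of_mem _ ⟨hr, hr'⟩, subset_rfl⟩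

theorem Setoid.IsPartition.union_ne_univ (hP : Setoid.IsPartition P) (h3 : 2 < P.ncard)
    (hp : p ∈ P) (hq : q ∈ P) : p ∪ q ≠ Set.univ := by
  have hpair : ({p, q} : Set (Set α)).ncard ≤ 2 := by simpa using Set.ncard_insert_le p {q}
  obtain ⟨r, hr, hrpq⟩ : ∃ r ∈ P, r ∉ ({p, q} : Set (Set α)) :=
    Set.exists_mem_notMem_of_ncard_lt_ncard (hpair.trans_lt h3)
  obtain ⟨x, hx⟩ := Setoid.nonempty_of_mem_partition hP hr
  have hdisj := hP.pairwiseDisjoint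
  have hxp : x ∉ p := Set.disjoint_left.mp (hdisj hr hp fun h => hrpq (Or.inl h)) hx
  have hxq : x ∉ q := Set.disjoint_left.mp (hdisj hr hq fun h => hrpq (Or.inr h)) hx
  exact fun h => (h ▸ Set.mem_univ x : x ∈ p ∪ q).elim hxp hxq

end MergeParts

section Terrain

variable {V : Type*} {G : SimpleGraph V} {P : Set (Set V)} {p q : Set V}

theorem ConnectedIn.union_of_adj {a b : V} (hp : ConnectedIn G p) (hq : ConnectedIn G q)
    (ha : a ∈ p) (hb : b ∈ q) (hab : G.Adj a b) : ConnectedIn G (p ∪ q) :=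
  SimpleGraph.connected_induce_union hp.preconnected hq.preconnected ha hb hab

theorem conforms_mergeParts (hconf : Conforms G P) (hpq : p ∪ q ∈ InducedTerrain G) :
    Conforms G (mergeParts P p q) := by
  rintro r (rfl | hr)
  exacts [hpq, hconf r hr.1]

theorem SimpleGraph.Connected.exists_adj_other_part (hG : G.Connected)
    (hP : Setoid.IsPartition P) (hp : p ∈ P) (hpne : p ≠ Set.univ) :
    ∃ q ∈ P, q ≠ p ∧ ∃ a ∈ p, ∃ b ∈ q, G.Adj a b := by
  obtain ⟨u, hu⟩ := Setoid.nonempty_of_mem_partition hP hp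
  obtain ⟨v, hv⟩ := (Set.ne_univ_iff_exists_notMem p).mp hpne
  obtain ⟨d, -, hd₁, hd₂⟩ := (hG u v).some.exists_boundary_dart p hu hv
  obtain ⟨q, ⟨hq, hdq⟩, -⟩ := hP.2 d.snd
  exact ⟨q, hq, fun h => hd₂ (h ▸ hdq), d.fst, hd₁, d.snd, hdq, d.adj⟩

end Terrain

theorem conforming_partition_of_three_parts_not_maximally_coarse_general
    {V : Type*} (G : SimpleGraph V) (hG : G.Connected)
    (P : Set (Set V)) (hP : Setoid.IsPartition P) (hconf : Conforms G P)
    (h3 : 3 ≤ P.ncard) :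
    (∃ P' : Set (Set V), Setoid.IsPartition P' ∧ Conforms G P' ∧ Coarsening P' P) ∧
    ¬ (∀ Q : Set (Set V), Setoid.IsPartition Q → Conforms G Q → ¬ Coarsening Q P) := by
  have hfin : P.Finite := Set.finite_of_ncard_pos (by omega)
  obtain ⟨p, hp⟩ := Set.nonempty_of_ncard_ne_zero (by omega : P.ncard ≠ 0)
  obtain ⟨hpc, hpne⟩ := hconf p hp
  obtain ⟨q, hq, hqp, a, ha, b, hb, hab⟩ := hG.exists_adj_other_part hP hp hpne
  have hmerge : p ∪ q ∈ InducedTerrain G :=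
    ⟨hpc.union_of_adj (hconf q hq).1 ha hb hab, hP.union_ne_univ (by omega) hp hq⟩
  have hP' := isPartition_mergeParts hP hp hq
  have hconf' := conforms_mergeParts hconf hmerge
  have hcoarse := coarsening_mergeParts hfin hp hq hqp.symm
  exact ⟨⟨_, hP', hconf', hcoarse⟩, fun h => h _ hP' hconf' hcoarse⟩

/-- A conforming partition with at least 3 parts admits a conforming coarsening,
so it is not maximally coarse. -/
theorem conforming_partition_of_three_parts_not_maximally_coarse
    {V : Type*} [Fintype V] (G : SimpleGraph V) (hG : G.Connected)
    (P : Set (Set V)) (hP : Setoid.IsPartition P) (hconf : Conforms G P)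
    (h3 : 3 ≤ P.ncard) :
    (∃ P' : Set (Set V), Setoid.IsPartition P' ∧ Conforms G P' ∧ Coarsening P' P) ∧
    ¬ (∀ Q : Set (Set V), Setoid.IsPartition Q → Conforms G Q → ¬ Coarsening Q P) :=
  conforming_partition_of_three_parts_not_maximally_coarse_general G hG P hP hconf h3
end

section
/- Let m ≥ 2 and let P_m be the path graph on {0, 1, ..., m−1}. A partition of {0, 1, ..., m−1} conforming to the terrain T(P_m) induced by P_m is maximally coarse if and only if it equals {{0, ..., k}, {k+1, ..., m−1}} for some 0 ≤ k ≤ m−2. Consequently, there are exactly m−1 maximally coarse conforming partitions. -/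
/-- The path graph on `{0, 1, ..., m-1}`: `i` and `j` are adjacent iff `|i - j| = 1`. -/
def pathG (m : ℕ) : SimpleGraph (Fin m) where
  Adj i j := (i : ℕ) + 1 = j ∨ (j : ℕ) + 1 = i
  symm := ⟨by intro i j h; tauto⟩
  loopless := ⟨by intro i h; rcases h with h | h <;> omega⟩

open Set

lemma Set.ncard_pair_le {α : Type*} (a b : α) : ({a, b} : Set α).ncard ≤ 2 :=
  (ncard_insert_le a {b}).trans_eq (by rw [ncard_singleton])

lemma Set.OrdConnected.exists_eq_Iic {α : Type*} [LinearOrder α] {s : Set α}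
    (hs : s.OrdConnected) (hfin : s.Finite) {a : α} (ha : IsBot a) (has : a ∈ s) :
    ∃ b, s = Iic b := by
  obtain ⟨b, hb, hmax⟩ := exists_max_image s id hfin ⟨a, has⟩
  exact ⟨b, Subset.antisymm hmax fun x hx => hs.out has hb ⟨ha x, hx⟩⟩

lemma pair_Iic_Ioi_injective {α : Type*} [PartialOrder α] :
    Function.Injective fun k : α => ({Iic k, Ioi k} : Set (Set α)) := by
  intro j k h
  rcases pair_eq_pair_iff.mp h with ⟨h₁, -⟩ | ⟨h₁, h₂⟩
  · exact Iic_injective h₁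
  · have hkj : j ∈ Ioi k := h₁ ▸ self_mem_Iic
    have hjk : k ∈ Ioi j := h₂ ▸ self_mem_Iic
    exact (lt_asymm hkj hjk).elim

lemma Fin.ncard_setOf_val_le_sub_two {m : ℕ} (hm : 2 ≤ m) :
    {k : Fin m | (k : ℕ) ≤ m - 2}.ncard = m - 1 := by
  have : {k : Fin m | (k : ℕ) ≤ m - 2} = {k : Fin m | (k : ℕ) < m - 1} := by
    ext k
    simp only [mem_ofPred_eq]
    omega
  rw [this, ncard_eq_toFinset_card', toFinset_ofPred, Fin.card_filter_val_lt]
  omega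

namespace Setoid

variable {α : Type*} {P : Set (Set α)} {s : Set α}

lemma isPartition_pair_compl (hs : s.Nonempty) (hsc : sᶜ.Nonempty) : IsPartition {s, sᶜ} := by
  refine ⟨?_, fun a => ?_⟩
  · rintro (h | h)
    exacts [hs.ne_empty h.symm, hsc.ne_empty h.symm]
  by_cases ha : a ∈ s
  · refine ⟨s, ⟨mem_insert s _, ha⟩, ?_⟩
    rintro t ⟨rfl | rfl, hat⟩
    exacts [rfl, absurd ha hat]
  · refine ⟨sᶜ, ⟨mem_insert_of_mem s rfl, ha⟩, ?_⟩
    rintro t ⟨rfl | rfl, hat⟩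
    exacts [absurd hat ha, rfl]

lemma IsPartition.subset_compl_of_ne (hP : IsPartition P) {p : Set α} (hp : p ∈ P) (hs : s ∈ P)
    (hps : p ≠ s) : p ⊆ sᶜ :=
  (hP.pairwiseDisjoint hp hs hps).subset_compl_right

lemma IsPartition.eq_pair_compl (hP : IsPartition P) (hPfin : P.Finite) (hs : s ∈ P)
    (hsu : s ≠ univ) (h2 : P.ncard ≤ 2) : P = {s, sᶜ} := by
  have hrest : (P \ {s}).ncard ≤ 1 := by rw [ncard_sdiff_singleton_of_mem hs]; omega
  have eq_compl : ∀ p ∈ P, p ≠ s → p = sᶜ := by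
    refine fun p hp hps => (hP.subset_compl_of_ne hp hs hps).antisymm fun x hxs => ?_
    obtain ⟨q, ⟨hq, hxq⟩, -⟩ := hP.2 x
    have hqs : q ≠ s := by rintro rfl; exact hxs hxq
    rwa [(ncard_le_one hPfin.sdiff).mp hrest q ⟨hq, hqs⟩ p ⟨hp, hps⟩] at hxq
  obtain ⟨x, hxs⟩ := nonempty_compl.mpr hsu
  obtain ⟨q, ⟨hq, hxq⟩, -⟩ := hP.2 x
  have hqs : q ≠ s := by rintro rfl; exact hxs hxq
  ext p
  refine ⟨fun hp => ?_, ?_⟩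
  · by_cases hps : p = s
    · exact Or.inl hps
    · exact Or.inr (eq_compl p hp hps)
  · rintro (rfl | rfl)
    · exact hs
    · rwa [← eq_compl q hq hqs]

lemma coarsening_pair_compl (hP : IsPartition P) (hs : s ∈ P) (h2 : 2 < P.ncard) :
    Coarsening {s, sᶜ} P := by
  refine ⟨(ncard_pair_le s sᶜ).trans_lt h2, fun p hp => ?_⟩
  by_cases hps : p = s
  · exact ⟨s, mem_insert s _, hps.le⟩
  · exact ⟨sᶜ, mem_insert_of_mem s rfl, hP.subset_compl_of_ne hp hs hps⟩

end Setoid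

section Terrain

variable {V : Type*} {G : SimpleGraph V} {P : Set (Set V)} {s : Set V}

def IsMaximallyCoarse (G : SimpleGraph V) (P : Set (Set V)) : Prop :=
  ∀ Q : Set (Set V), Setoid.IsPartition Q → Conforms G Q → ¬ Coarsening Q P

lemma ConnectedIn.nonempty (hs : ConnectedIn G s) : s.Nonempty :=
  nonempty_coe_sort.mp (SimpleGraph.Connected.nonempty hs)

lemma conforms_pair {t : Set V} (hs : s ∈ InducedTerrain G) (ht : t ∈ InducedTerrain G) :
    Conforms G {s, t} := by
  rintro p (rfl | rfl)
  exacts [hs, ht]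

lemma Conforms.two_le_ncard [Finite V] [Nonempty V] (hP : Setoid.IsPartition P)
    (hC : Conforms G P) : 2 ≤ P.ncard := by
  obtain ⟨x⟩ := ‹Nonempty V›
  obtain ⟨p, ⟨hp, hxp⟩, -⟩ := hP.2 x
  obtain ⟨y, hyp⟩ := nonempty_compl.mpr (hC p hp).2
  obtain ⟨q, ⟨hq, hyq⟩, -⟩ := hP.2 y
  exact (one_lt_ncard).mpr ⟨p, hp, q, hq, by rintro rfl; exact hyp hyq⟩

theorem isMaximallyCoarse_iff_eq_pair_compl [Finite V] (hP : Setoid.IsPartition P)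
    (hC : Conforms G P) (hs : s ∈ P) (hsc : sᶜ ∈ InducedTerrain G) :
    IsMaximallyCoarse G P ↔ P = {s, sᶜ} := by
  have hsne := Setoid.nonempty_of_mem_partition hP hs
  have : Nonempty V := hsne.to_subtype.map Subtype.val
  refine ⟨fun hmax => ?_, ?_⟩
  · refine hP.eq_pair_compl (toFinite P) hs (hC s hs).2 (not_lt.mp fun h2 => ?_)
    exact hmax _ (Setoid.isPartition_pair_compl hsne hsc.1.nonempty)
      (conforms_pair (hC s hs) hsc) (Setoid.coarsening_pair_compl hP hs h2)
  · rintro rfl Q hQ hQC ⟨hlt, -⟩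
    have := hQC.two_le_ncard hQ
    have := ncard_pair_le s sᶜ
    omega

end Terrain

section PathGraph

variable {m : ℕ}

lemma pathG_adj_iff {i j : Fin m} : (pathG m).Adj i j ↔ (i : ℕ) + 1 = j ∨ (j : ℕ) + 1 = i :=
  Iff.rfl

lemma ordConnected_of_connectedIn_pathG {A : Set (Fin m)} (hA : ConnectedIn (pathG m) A) :
    A.OrdConnected := by
  refine ⟨fun x hx y hy z ⟨hxz, hzy⟩ => ?_⟩
  by_contra hzA
  obtain ⟨w⟩ := hA.preconnected ⟨x, hx⟩ ⟨y, hy⟩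
  have hxz' : x < z := lt_of_le_of_ne hxz (by rintro rfl; exact hzA hx)
  -- a walk from below `z` to above `z` must step onto `z`
  obtain ⟨d, -, hd₁, hd₂⟩ := w.exists_boundary_dart {v | (v : Fin m) < z} hxz' hzy.not_gt
  have hadj : ((d.fst : Fin m) : ℕ) + 1 = (d.snd : Fin m) ∨ ((d.snd : Fin m) : ℕ) + 1 = d.fst :=
    d.adj
  rw [mem_ofPred_eq, Fin.lt_def] at hd₁ hd₂
  have : (d.snd : Fin m) = z := Fin.ext (by omega)
  exact hzA (this ▸ d.snd.2)

lemma reachable_induce_pathG {A : Set (Fin m)} (hA : A.OrdConnected) {u v : A} (huv : u ≤ v) :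
    ((pathG m).induce A).Reachable u v := by
  suffices ∀ d : ℕ, ∀ v : A, ((v : Fin m) : ℕ) = (u : Fin m) + d →
      ((pathG m).induce A).Reachable u v from
    this ((v : Fin m) - (u : Fin m)) v (by rw [Subtype.mk_le_mk, Fin.le_def] at huv; omega)
  intro d
  induction d with
  | zero => intro v hv; rw [Subtype.ext (Fin.ext hv)]
  | succ d ih =>
    intro v hv
    let w : Fin m := ⟨(u : Fin m) + d, by omega⟩
    have hw : w ∈ A :=
      hA.out u.2 v.2 ⟨Fin.le_def.mpr (by simp [w]), Fin.le_def.mpr (by simp [w]; omega)⟩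
    have hwv : ((pathG m).induce A).Adj ⟨w, hw⟩ v :=
      pathG_adj_iff.mpr (Or.inl (by simp [w]; omega))
    exact (ih ⟨w, hw⟩ rfl).trans hwv.reachable

theorem connectedIn_pathG_iff {A : Set (Fin m)} :
    ConnectedIn (pathG m) A ↔ A.Nonempty ∧ A.OrdConnected := by
  refine ⟨fun hA => ⟨hA.nonempty, ordConnected_of_connectedIn_pathG hA⟩, fun ⟨hne, hA⟩ => ?_⟩
  have := hne.to_subtype
  refine ⟨fun u v => ?_⟩
  rcases le_total u v with huv | hvu
  exacts [reachable_induce_pathG hA huv, (reachable_induce_pathG hA hvu).symm]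

lemma Iic_mem_inducedTerrain_pathG {k : Fin m} (hk : (k : ℕ) + 1 < m) :
    Iic k ∈ InducedTerrain (pathG m) := by
  refine ⟨connectedIn_pathG_iff.mpr ⟨nonempty_Iic, ordConnected_Iic⟩, fun h => ?_⟩
  have : (⟨k + 1, hk⟩ : Fin m) ∈ Iic k := h ▸ mem_univ _
  exact Nat.not_succ_le_self k this

lemma Ioi_mem_inducedTerrain_pathG {k : Fin m} (hk : (k : ℕ) + 1 < m) :
    Ioi k ∈ InducedTerrain (pathG m) :=
  ⟨connectedIn_pathG_iff.mpr ⟨⟨⟨k + 1, hk⟩, Nat.lt_succ_self k⟩, ordConnected_Ioi⟩,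
    fun h => lt_irrefl k (h ▸ mem_univ k : k ∈ Ioi k)⟩

lemma isPartition_pair_Iic_Ioi {k : Fin m} (hk : (k : ℕ) + 1 < m) :
    Setoid.IsPartition {Iic k, Ioi k} := by
  rw [← compl_Iic]
  exact Setoid.isPartition_pair_compl nonempty_Iic
    (by rw [compl_Iic]; exact (Ioi_mem_inducedTerrain_pathG hk).1.nonempty)

lemma conforms_pair_Iic_Ioi {k : Fin m} (hk : (k : ℕ) + 1 < m) :
    Conforms (pathG m) {Iic k, Ioi k} :=
  conforms_pair (Iic_mem_inducedTerrain_pathG hk) (Ioi_mem_inducedTerrain_pathG hk)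

lemma exists_Iic_mem_of_conforms_pathG (hm : 0 < m) {P : Set (Set (Fin m))}
    (hP : Setoid.IsPartition P) (hC : Conforms (pathG m) P) :
    ∃ k : Fin m, (k : ℕ) + 1 < m ∧ Iic k ∈ P := by
  obtain ⟨p, ⟨hp, h0p⟩, -⟩ := hP.2 ⟨0, hm⟩
  obtain ⟨k, rfl⟩ := (ordConnected_of_connectedIn_pathG (hC p hp).1).exists_eq_Iic
    (toFinite _) (fun x => Fin.le_def.mpr x.val.zero_le) h0p
  obtain ⟨j, hj⟩ := nonempty_compl.mpr (hC _ hp).2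
  have hkj : (k : ℕ) < j := not_le.mp hj
  exact ⟨k, by omega, hp⟩

theorem isMaximallyCoarse_pathG_iff (hm : 2 ≤ m) {P : Set (Set (Fin m))}
    (hP : Setoid.IsPartition P) (hC : Conforms (pathG m) P) :
    IsMaximallyCoarse (pathG m) P ↔ ∃ k : Fin m, (k : ℕ) ≤ m - 2 ∧ P = {Iic k, Ioi k} := by
  refine ⟨fun hmax => ?_, ?_⟩
  · obtain ⟨k, hk, hkP⟩ := exists_Iic_mem_of_conforms_pathG (by omega) hP hC
    rw [isMaximallyCoarse_iff_eq_pair_compl hP hC hkP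
      (by rw [compl_Iic]; exact Ioi_mem_inducedTerrain_pathG hk), compl_Iic] at hmax
    exact ⟨k, by omega, hmax⟩
  · rintro ⟨k, hk, rfl⟩
    rw [← compl_Iic] at hP hC ⊢
    exact (isMaximallyCoarse_iff_eq_pair_compl hP hC (mem_insert _ _)
      (by rw [compl_Iic]; exact Ioi_mem_inducedTerrain_pathG (by omega))).mpr rfl

lemma setOf_isMaximallyCoarse_pathG (hm : 2 ≤ m) :
    {P | Setoid.IsPartition P ∧ Conforms (pathG m) P ∧ IsMaximallyCoarse (pathG m) P} =
      (fun k : Fin m => ({Iic k, Ioi k} : Set (Set (Fin m)))) '' {k | (k : ℕ) ≤ m - 2} := by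
  ext P
  constructor
  · rintro ⟨hP, hC, hmax⟩
    obtain ⟨k, hk, rfl⟩ := (isMaximallyCoarse_pathG_iff hm hP hC).mp hmax
    exact ⟨k, hk, rfl⟩
  · rintro ⟨k, hk : (k : ℕ) ≤ m - 2, rfl⟩
    have hP := isPartition_pair_Iic_Ioi (k := k) (by omega)
    have hC := conforms_pair_Iic_Ioi (k := k) (by omega)
    exact ⟨hP, hC, (isMaximallyCoarse_pathG_iff hm hP hC).mpr ⟨k, hk, rfl⟩⟩

lemma ncard_setOf_isMaximallyCoarse_pathG (hm : 2 ≤ m) :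
    {P | Setoid.IsPartition P ∧ Conforms (pathG m) P ∧ IsMaximallyCoarse (pathG m) P}.ncard =
      m - 1 := by
  rw [setOf_isMaximallyCoarse_pathG hm, ncard_image_of_injective _ pair_Iic_Ioi_injective,
    Fin.ncard_setOf_val_le_sub_two hm]

end PathGraph

/-- A conforming partition of the path graph is maximally coarse iff it is
`{{0,...,k}, {k+1,...,m-1}}` for some `0 ≤ k ≤ m-2`; hence there are exactly
`m - 1` maximally coarse conforming partitions. -/
theorem pathGraph_maximally_coarse_iff (m : ℕ) (hm : 2 ≤ m) :
    (∀ P : Set (Set (Fin m)), Setoid.IsPartition P → Conforms (pathG m) P →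
      ((∀ Q : Set (Set (Fin m)), Setoid.IsPartition Q → Conforms (pathG m) Q →
          ¬ Coarsening Q P) ↔
        ∃ k : Fin m, (k : ℕ) ≤ m - 2 ∧ P = ({Set.Iic k, Set.Ioi k} : Set (Set (Fin m))))) ∧
    {P : Set (Set (Fin m)) | Setoid.IsPartition P ∧ Conforms (pathG m) P ∧
      ∀ Q : Set (Set (Fin m)), Setoid.IsPartition Q → Conforms (pathG m) Q →
        ¬ Coarsening Q P}.ncard = m - 1 := by
  exact ⟨fun _ hP hC => isMaximallyCoarse_pathG_iff hm hP hC,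
    ncard_setOf_isMaximallyCoarse_pathG hm⟩
end

section
/- Let V be a finite set and let A₁ and A₂ each be collections of proper nonempty subsets of V containing all singletons (terrains on V). Consider V = {Monkey, Chimp, Car, Truck, Dog, Wolf} and the terrain A consisting of all six singletons together with the sets {Monkey, Chimp}, {Car, Truck}, {Dog, Wolf}, and {Monkey, Chimp, Dog, Wolf}. Then there is no simple graph G on V for which A equals the collection of subsets of V that are connected in G and not equal to V (i.e., A is not the terrain induced by any graph on V). -/
/-- The six levels of the categorical variable in the paper's example. -/
inductive Animal : Type
  | Monkey | Chimp | Car | Truck | Dog | Wolf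
  deriving DecidableEq

open Animal in
/-- The terrain consisting of all singletons together with the "primates",
"vehicles", "canines", and "mammals". -/
def exampleTerrain : Set (Set Animal) :=
  {{Monkey}, {Chimp}, {Car}, {Truck}, {Dog}, {Wolf},
   {Monkey, Chimp}, {Car, Truck}, {Dog, Wolf},
   {Monkey, Chimp, Dog, Wolf}}

section

open SimpleGraph

variable {V : Type*} {G : SimpleGraph V} {A T : Set V} {a b : V}

lemma ConnectedIn.exists_adj_mem_notMem (hA : ConnectedIn G A) (ha : a ∈ A) (haT : a ∈ T)
    (hb : b ∈ A) (hbT : b ∉ T) : ∃ x ∈ A, ∃ y ∈ A, x ∈ T ∧ y ∉ T ∧ G.Adj x y := by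
  obtain ⟨p⟩ := hA.preconnected ⟨a, ha⟩ ⟨b, hb⟩
  obtain ⟨⟨⟨x, y⟩, hxy⟩, -, hxT, hyT⟩ := p.exists_boundary_dart {x | x.1 ∈ T} haT hbT
  exact ⟨x, x.2, y, y.2, hxT, hyT, hxy⟩

lemma exists_pair_mem_inducedTerrain (hA : A ∈ InducedTerrain G) (ha : a ∈ A) (haT : a ∈ T)
    (hb : b ∈ A) (hbT : b ∉ T) :
    ∃ x ∈ A, ∃ y ∈ A, x ∈ T ∧ y ∉ T ∧ {x, y} ∈ InducedTerrain G := by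
  obtain ⟨x, hx, y, hy, hxT, hyT, hxy⟩ := hA.1.exists_adj_mem_notMem ha haT hb hbT
  have hsub : ({x, y} : Set V) ⊆ A := Set.insert_subset hx (Set.singleton_subset_iff.mpr hy)
  exact ⟨x, hx, y, hy, hxT, hyT, induce_pair_connected_of_adj hxy,
    fun h => hA.2 (Set.eq_univ_of_univ_subset (h ▸ hsub))⟩

end

open Animal

instance : Fintype Animal :=
  ⟨⟨{Monkey, Chimp, Car, Truck, Dog, Wolf}, by decide⟩, by intro x; cases x <;> decide⟩

lemma pair_notMem_exampleTerrain :
    ∀ x ∈ ({Monkey, Chimp} : Set Animal), ∀ y ∈ ({Dog, Wolf} : Set Animal),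
      ({x, y} : Set Animal) ∉ exampleTerrain := by
  simp only [Set.mem_insert_iff, Set.mem_singleton_iff]
  rintro x (rfl | rfl) y (rfl | rfl) <;>
    simp only [exampleTerrain, Set.mem_insert_iff, Set.mem_singleton_iff, Set.ext_iff] <;> decide

/-- The example terrain is not the terrain induced by any graph on `Animal`. -/
theorem exampleTerrain_not_induced_by_graph :
    ¬ ∃ G : SimpleGraph Animal, exampleTerrain = InducedTerrain G := by
  rintro ⟨G, hG⟩
  have hmammals : {Monkey, Chimp, Dog, Wolf} ∈ InducedTerrain G := by
    rw [← hG]; simp [exampleTerrain]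
  obtain ⟨x, -, y, hy, hxT, hyT, hxy⟩ := exists_pair_mem_inducedTerrain hmammals
    (a := Monkey) (b := Dog) (T := {Monkey, Chimp}) (by simp) (by simp) (by simp) (by simp)
  have hy_canine : y ∈ ({Dog, Wolf} : Set Animal) := by
    simp only [Set.mem_insert_iff, Set.mem_singleton_iff] at hy hyT ⊢
    tauto
  exact pair_notMem_exampleTerrain x hxT y hy_canine (hG ▸ hxy)
end
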